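/- arXiv:1707.03562 — 5 statements merged into one kernel-verified Lean document; each statement's English description precedes it below -/
import Mathlib

section
/- Let G be a finite group acting transitively on a finite set Ω with point stabilizer H, and suppose all involutions of G are conjugate to one another in G and G contains at least one involution. Then the maximal number of points of Ω fixed by an involution of G equals i₂(H) · |Ω| / i₂(G), where i₂(X) denotes the number of involutions (elements of order exactly 2) in a finite group X; in fact every involution of G fixing at least one point fixes exactly this many points. -/
/-!
Count the pairs `(t, a)` with `t` in the conjugacy class of an involution and `t • a = a` in
two ways. Conjugate elements have equally many fixed points, and conjugation by `g` carries the
class elements in the stabilizer of `a` bijectively onto those in the stabilizer of `g • a`, so by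
transitivity every stabilizer contains `i₂(H)` of them. When all involutions are conjugate, the
class is the set of all involutions.
-/

open MulAction Finset

section

variable {G Ω : Type*} [Group G] [MulAction G Ω]

theorem IsConj.orderOf_eq {s t : G} (h : IsConj s t) : orderOf s = orderOf t := by
  obtain ⟨c, hc⟩ := h
  exact hc.orderOf_eq _

theorem MulAction.card_fixedBy_eq_of_isConj {s t : G} (h : IsConj s t) :
    Nat.card (fixedBy Ω s) = Nat.card (fixedBy Ω t) := by
  obtain ⟨g, rfl⟩ := isConj_iff.mp h
  rw [← smul_fixedBy, Nat.card_coe_set_eq, Nat.card_coe_set_eq, Set.ncard_smul_set]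

theorem MulAction.card_conjugatesOf_inter_stabilizer_smul (t g : G) (a : Ω) :
    Nat.card ↥(conjugatesOf t ∩ stabilizer G (g • a)) =
      Nat.card ↥(conjugatesOf t ∩ stabilizer G a) := by
  have hx : ∀ x : G, IsConj x (g * x * g⁻¹) := fun x => isConj_iff.mpr ⟨g, rfl⟩
  refine (Nat.card_congr ((MulAut.conj g).toEquiv.subtypeEquiv fun x => ?_)).symm
  refine and_congr ⟨fun h => h.trans (hx x), fun h => h.trans (hx x).symm⟩ ?_
  simp [mem_stabilizer_iff, mul_smul]

theorem MulAction.sum_card_fixedBy_eq_sum_card_inter_stabilizer [Fintype G] [Fintype Ω]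
    (S : Finset G) :
    ∑ t ∈ S, Nat.card (fixedBy Ω t) = ∑ a : Ω, Nat.card ↥((S : Set G) ∩ stabilizer G a) := by
  classical
  simp only [Nat.card_eq_fintype_card, Fintype.card_subtype, mem_fixedBy, Set.mem_inter_iff,
    SetLike.mem_coe, mem_stabilizer_iff, ← filter_filter, filter_mem_eq_inter, univ_inter]
  exact sum_card_bipartiteAbove_eq_sum_card_bipartiteBelow (fun t a => t • a = a)

theorem MulAction.card_fixedBy_mul_card_conjugatesOf [Fintype G] [Fintype Ω]
    [IsPretransitive G Ω] (t : G) (ω : Ω) :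
    Nat.card (fixedBy Ω t) * Nat.card (conjugatesOf t) =
      Nat.card ↥(conjugatesOf t ∩ stabilizer G ω) * Nat.card Ω := by
  classical
  let S : Finset G := {x | IsConj t x}
  have hS : (S : Set G) = conjugatesOf t := by ext; simp [S, conjugatesOf]
  have hfix : ∀ x ∈ S, Nat.card (fixedBy Ω x) = Nat.card (fixedBy Ω t) := fun x hx =>
    (card_fixedBy_eq_of_isConj (by simpa [S] using hx)).symm
  have hstab : ∀ a : Ω, Nat.card ↥((S : Set G) ∩ stabilizer G a) =
      Nat.card ↥(conjugatesOf t ∩ stabilizer G ω) := fun a => by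
    obtain ⟨g, rfl⟩ := exists_smul_eq G ω a
    rw [hS, card_conjugatesOf_inter_stabilizer_smul]
  have hcount := sum_card_fixedBy_eq_sum_card_inter_stabilizer (Ω := Ω) S
  rw [sum_congr rfl hfix, sum_congr rfl fun a _ => hstab a, sum_const, sum_const, card_univ,
    smul_eq_mul, smul_eq_mul, ← Nat.card_eq_fintype_card] at hcount
  have hcard : Nat.card (conjugatesOf t) = #S := by
    rw [← hS, Nat.card_coe_set_eq, Set.ncard_coe_finset]
  rw [hcard, mul_comm, hcount, mul_comm]

end

theorem stmt1 {G Ω : Type*} [Group G] [Fintype G] [Fintype Ω] [MulAction G Ω]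
    [MulAction.IsPretransitive G Ω] (ω : Ω)
    (hex : ∃ t : G, orderOf t = 2)
    (hconj : ∀ t s : G, orderOf t = 2 → orderOf s = 2 → ∃ g : G, g * t * g⁻¹ = s) :
    (∀ t : G, orderOf t = 2 → (MulAction.fixedBy Ω t).Nonempty →
      Nat.card (MulAction.fixedBy Ω t) * Nat.card {x : G | orderOf x = 2} =
        Nat.card {x : G | orderOf x = 2 ∧ x ∈ MulAction.stabilizer G ω} * Nat.card Ω) ∧
    ((Finset.univ.filter (fun t : G => orderOf t = 2)).sup
        (fun t => Nat.card (MulAction.fixedBy Ω t))) *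
        Nat.card {x : G | orderOf x = 2} =
      Nat.card {x : G | orderOf x = 2 ∧ x ∈ MulAction.stabilizer G ω} * Nat.card Ω := by
  have hclass : ∀ t : G, orderOf t = 2 → {x : G | orderOf x = 2} = conjugatesOf t :=
    fun t ht => Set.ext fun x =>
      ⟨fun hx => isConj_iff.mpr (hconj t x ht hx), fun h => h.orderOf_eq.symm.trans ht⟩
  have hformula : ∀ t : G, orderOf t = 2 →
      Nat.card (fixedBy Ω t) * Nat.card {x : G | orderOf x = 2} =
        Nat.card {x : G | orderOf x = 2 ∧ x ∈ stabilizer G ω} * Nat.card Ω := fun t ht => by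
    have := card_fixedBy_mul_card_conjugatesOf (Ω := Ω) t ω
    rwa [← hclass t ht] at this
  obtain ⟨t₀, ht₀⟩ := hex
  have hsup : ((univ.filter fun t : G => orderOf t = 2).sup
      fun t => Nat.card (fixedBy Ω t)) = Nat.card (fixedBy Ω t₀) := by
    rw [sup_congr rfl fun t ht => card_fixedBy_eq_of_isConj (isConj_iff.mpr
      (hconj t t₀ (mem_filter.mp ht).2 ht₀))]
    exact sup_const ⟨t₀, by simpa using ht₀⟩ _
  exact ⟨fun t ht _ => hformula t ht, hsup ▸ hformula t₀ ht₀⟩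
end

section
/- Let G be a finite group acting transitively on a finite set Ω with point stabilizer H, and let t ∈ H be an involution. Then the number of fixed points of t on Ω is at least (|t^H| / |t^G|) · |Ω|, where t^H and t^G denote the conjugacy classes of t in H and G respectively. -/
/-!
Write `K` for the stabilizer of `ω` and `C` for the centralizer of `t`. Orbit–stabilizer turns
all the cardinalities into indices: `|t^K| = [K : C ∩ K]`, `|t^G| = [G : C]`, `|Ω| = [G : K]`,
and the `C`-orbit of `ω` has size `[C : C ∩ K]`. Both `|t^K| · |Ω|` and
`[C : C ∩ K] · |t^G|` equal `[G : C ∩ K]`, and the `C`-orbit of `ω` consists of fixed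
points of `t`.
-/

open MulAction Subgroup
open scoped Pointwise

theorem Subgroup.relIndex_mul_index_comm {G : Type*} [Group G] (H K : Subgroup G) :
    H.relIndex K * K.index = K.relIndex H * H.index := by
  rw [← inf_relIndex_right, relIndex_mul_index inf_le_right, ← inf_relIndex_left,
    relIndex_mul_index inf_le_left]

namespace MulAction

variable {G X : Type*} [Group G] [MulAction G X]

theorem card_orbit_subgroup_eq_relIndex (S : Subgroup G) (x : X) :
    Nat.card (orbit S x) = (stabilizer G x).relIndex S := by
  rw [relIndex, Nat.card_coe_set_eq, ← index_stabilizer]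
  rfl

theorem orbit_centralizer_subset_fixedBy {t : G} {x : X} (hx : x ∈ fixedBy X t) :
    orbit (centralizer {t}) x ⊆ fixedBy X t := by
  rintro _ ⟨⟨c, hc⟩, rfl⟩
  have hct : Commute t c := (mem_centralizer_singleton_iff.mp hc).symm
  have hfix : c • fixedBy X t = fixedBy X t := fixedBy_mem_fixedBy_of_commute hct
  rw [← hfix]
  exact Set.smul_mem_smul_set hx

end MulAction

theorem Subgroup.comap_toConjAct_stabilizer {G : Type*} [Group G] (t : G) :
    (stabilizer (ConjAct G) t).comap (ConjAct.toConjAct : G ≃* ConjAct G).toMonoidHom =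
      centralizer {t} := by
  ext c
  simp only [mem_comap, mem_stabilizer_iff, ConjAct.smul_def, MulEquiv.coe_toMonoidHom,
    ConjAct.ofConjAct_toConjAct, mem_centralizer_singleton_iff]
  exact mul_inv_eq_iff_eq_mul

theorem Subgroup.card_conjugates_eq_relIndex_centralizer {G : Type*} [Group G]
    (S : Subgroup G) (t : G) :
    Nat.card {g : G | ∃ h ∈ S, g = h * t * h⁻¹} = (centralizer {t}).relIndex S := by
  have hconj : {g : G | ∃ h ∈ S, g = h * t * h⁻¹} =
      orbit (S.map (ConjAct.toConjAct : G ≃* ConjAct G).toMonoidHom) t := by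
    ext g
    constructor
    · rintro ⟨h, hh, rfl⟩
      exact ⟨⟨ConjAct.toConjAct h, h, hh, rfl⟩, rfl⟩
    · rintro ⟨⟨_, h, hh, rfl⟩, rfl⟩
      exact ⟨h, hh, rfl⟩
  rw [hconj, card_orbit_subgroup_eq_relIndex, ← relIndex_comap, comap_toConjAct_stabilizer]

theorem stmt2_general {G Ω : Type*} [Group G] [Fintype Ω] [MulAction G Ω]
    [MulAction.IsPretransitive G Ω] (ω : Ω) (t : G)
    (ht : t ∈ MulAction.stabilizer G ω) :
    Nat.card {g : G | ∃ h ∈ MulAction.stabilizer G ω, g = h * t * h⁻¹} * Nat.card Ω ≤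
    Nat.card (MulAction.fixedBy Ω t) * Nat.card {g : G | ∃ c : G, g = c * t * c⁻¹} := by
  have hclass : {g : G | ∃ c : G, g = c * t * c⁻¹} =
      {g | ∃ c ∈ (⊤ : Subgroup G), g = c * t * c⁻¹} := by
    simp only [mem_top, true_and]
  have horbit : (stabilizer G ω).relIndex (centralizer {t}) ≤ Nat.card (fixedBy Ω t) := by
    rw [← card_orbit_subgroup_eq_relIndex]
    exact Nat.card_mono (Set.toFinite _) (orbit_centralizer_subset_fixedBy ht)
  rw [hclass, card_conjugates_eq_relIndex_centralizer, card_conjugates_eq_relIndex_centralizer,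
    relIndex_top_right, ← index_stabilizer_of_transitive G ω, relIndex_mul_index_comm]
  exact Nat.mul_le_mul_right _ horbit

theorem stmt2 {G Ω : Type*} [Group G] [Fintype G] [Fintype Ω] [MulAction G Ω]
    [MulAction.IsPretransitive G Ω] (ω : Ω) (t : G)
    (ht : t ∈ MulAction.stabilizer G ω) (h2 : orderOf t = 2) :
    Nat.card {g : G | ∃ h ∈ MulAction.stabilizer G ω, g = h * t * h⁻¹} * Nat.card Ω ≤
    Nat.card (MulAction.fixedBy Ω t) * Nat.card {g : G | ∃ c : G, g = c * t * c⁻¹} :=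
  stmt2_general ω t ht
end

section
/- Let X be a finite group and Y ≤ Z(X) a central subgroup. Then for any s ∈ X, the coset sY contains at most |Y|₂ elements whose order is a power of 2, where |Y|₂ denotes the largest power of 2 dividing |Y|. -/
/-!
If `x₀ = s y₀` and `x = s y` are `p`-elements of the coset `sY`, they commute (as `Y` is
central), so `x₀⁻¹ x = y₀⁻¹ y` is a `p`-element of `Y`. Hence `x ↦ x₀⁻¹ x` embeds the
`p`-elements of `sY` into those of the abelian group `Y`, which all lie in its unique (normal)
Sylow `p`-subgroup, of order `|Y|ₚ`.
-/

open Subgroup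

theorem Commute.exists_orderOf_inv_mul_eq_prime_pow {G : Type*} [Group G] {p : ℕ}
    (hp : p.Prime) {a b : G} (hab : Commute a b) (ha : ∃ i, orderOf a = p ^ i)
    (hb : ∃ j, orderOf b = p ^ j) : ∃ k, orderOf (a⁻¹ * b) = p ^ k := by
  obtain ⟨i, hi⟩ := ha
  obtain ⟨j, hj⟩ := hb
  have hdvd : orderOf (a⁻¹ * b) ∣ p ^ (i + j) := by
    simpa [pow_add, hi, hj] using hab.inv_left.orderOf_mul_dvd_mul_orderOf
  obtain ⟨k, -, hk⟩ := (Nat.dvd_prime_pow hp).mp hdvd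
  exact ⟨k, hk⟩

theorem Sylow.mem_of_orderOf_eq_prime_pow {G : Type*} [Group G] [Finite G] {p : ℕ} [Fact p.Prime]
    (P : Sylow p G) [P.Normal] {g : G} (hg : ∃ k, orderOf g = p ^ k) : g ∈ P := by
  obtain ⟨k, hk⟩ := hg
  have hpg : IsPGroup p (zpowers g) := IsPGroup.of_card (n := k) (by rw [Nat.card_zpowers, hk])
  obtain ⟨Q, hQ⟩ := hpg.exists_le_sylow
  let := Sylow.unique_of_normal P inferInstance
  rw [Subsingleton.elim P Q]
  exact hQ (mem_zpowers g)

theorem card_setOf_orderOf_eq_prime_pow_le {G : Type*} [Group G] [Finite G] [IsMulCommutative G]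
    (p : ℕ) [Fact p.Prime] :
    Nat.card {g : G | ∃ k, orderOf g = p ^ k} ≤ p ^ (Nat.card G).factorization p := by
  obtain ⟨P⟩ := (inferInstance : Nonempty (Sylow p G))
  rw [← P.card_eq_multiplicity]
  exact Nat.card_mono (Set.toFinite _) fun g hg => P.mem_of_orderOf_eq_prime_pow hg

theorem Subgroup.isMulCommutative_of_le_center {G : Type*} [Group G] {H : Subgroup G}
    (hH : H ≤ center G) : IsMulCommutative H :=
  ⟨⟨fun a b => Subtype.ext (mem_center_iff.mp (hH a.2) b).symm⟩⟩

theorem card_leftCoset_orderOf_eq_prime_pow_le {G : Type*} [Group G] [Finite G] (p : ℕ)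
    [Fact p.Prime] {H : Subgroup G} (hH : H ≤ center G) (s : G) :
    Nat.card {x : G | (∃ y ∈ H, x = s * y) ∧ ∃ k, orderOf x = p ^ k} ≤
      p ^ (Nat.card H).factorization p := by
  set S := {x : G | (∃ y ∈ H, x = s * y) ∧ ∃ k, orderOf x = p ^ k}
  obtain hS | ⟨x₀, ⟨y₀, hy₀, rfl⟩, hx₀⟩ := S.eq_empty_or_nonempty
  · simp [hS]
  have := isMulCommutative_of_le_center hH
  set T := {h : H | ∃ k, orderOf h = p ^ k}
  have hST : S ⊆ (fun h : H => s * y₀ * h) '' T := by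
    rintro x ⟨⟨y, hy, rfl⟩, hx⟩
    have hcomm : Commute (s * y₀) (s * y) :=
      ((Commute.refl s).mul_right (mem_center_iff.mp (hH hy) s)).mul_left
        (mem_center_iff.mp (hH hy₀) _).symm
    refine ⟨⟨y₀⁻¹ * y, mul_mem (inv_mem hy₀) hy⟩, ?_, by simp [mul_assoc]⟩
    simpa [T, mul_assoc] using hcomm.exists_orderOf_inv_mul_eq_prime_pow Fact.out hx₀ hx
  calc Nat.card S ≤ Nat.card ((fun h : H => s * y₀ * h) '' T) :=
        Nat.card_mono (Set.toFinite _) hST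
    _ ≤ Nat.card T := Set.ncard_image_le
    _ ≤ p ^ (Nat.card H).factorization p := card_setOf_orderOf_eq_prime_pow_le p

theorem stmt4 {X : Type*} [Group X] [Fintype X] (Y : Subgroup X)
    (hY : Y ≤ Subgroup.center X) (s : X) :
    Nat.card {x : X | (∃ y ∈ Y, x = s * y) ∧ ∃ k : ℕ, orderOf x = 2 ^ k} ≤
    2 ^ ((Nat.card Y).factorization 2) :=
  card_leftCoset_orderOf_eq_prime_pow_le 2 hY s
end

section
/- Let q be an odd prime power. Then the number of involutions in PGL₂(𝔽_q) = GL₂(𝔽_q)/Z(GL₂(𝔽_q)) is exactly q². -/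
/-!
An element of `PGL₂(F)` has order 2 exactly when a lift `g` has `g²` scalar but is not scalar
itself. By Cayley–Hamilton `g² = tr(g) g - det(g)`, so in odd characteristic this happens exactly
when `tr g = 0`. A traceless matrix `!![a, b; c, -a]` is invertible iff `a² + bc ≠ 0`, and
`a² + bc = 0` has `q²` solutions (`q` for each `b`). Hence `GL₂(F)` has `q²(q - 1)` traceless
elements, and each involution of `PGL₂(F)` has `q - 1` of them as lifts.
-/

open Matrix

section Count

variable {F : Type*} [Field F] [Fintype F] [DecidableEq F]

theorem card_mul_self_add_mul_eq_zero (b : F) :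
    Fintype.card {p : F × F // p.1 * p.1 + b * p.2 = 0} = Fintype.card F := by
  by_cases hb : b = 0
  · subst hb
    refine Fintype.card_congr
      { toFun p := p.1.2
        invFun c := ⟨(0, c), by simp⟩
        left_inv := ?_
        right_inv _ := rfl }
    rintro ⟨⟨a, c⟩, h⟩
    have ha : a = 0 := by simpa using h
    subst ha
    rfl
  · refine Fintype.card_congr
      { toFun p := p.1.1
        invFun a := ⟨(a, -(a * a) / b), by field_simp; ring⟩
        left_inv := ?_
        right_inv _ := rfl }
    rintro ⟨⟨a, c⟩, h⟩
    have hc : c = -(a * a) / b := by field_simp; linear_combination h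
    subst hc
    rfl

theorem card_mul_self_add_mul_eq_zero_triple :
    Fintype.card {p : F × F × F // p.1 * p.1 + p.2.1 * p.2.2 = 0} = Fintype.card F ^ 2 := by
  let e : {p : F × F × F // p.1 * p.1 + p.2.1 * p.2.2 = 0} ≃
      Σ b : F, {p : F × F // p.1 * p.1 + b * p.2 = 0} :=
    { toFun p := ⟨p.1.2.1, (p.1.1, p.1.2.2), p.2⟩
      invFun s := ⟨(s.2.1.1, s.1, s.2.1.2), s.2.2⟩
      left_inv _ := rfl
      right_inv _ := rfl }
  simp only [Fintype.card_congr e, Fintype.card_sigma, card_mul_self_add_mul_eq_zero,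
    Finset.sum_const, Finset.card_univ, smul_eq_mul, sq]

end Count

namespace Matrix

section FinTwo

variable {R : Type*} [CommRing R]

theorem mul_self_fin_two (M : Matrix (Fin 2) (Fin 2) R) :
    M * M = M.trace • M - M.det • 1 := by
  rw [eta_fin_two M]
  ext i j
  fin_cases i <;> fin_cases j <;>
    simp [trace_fin_two, det_fin_two, one_fin_two] <;> ring

def traceZeroEquiv : {M : Matrix (Fin 2) (Fin 2) R // M.trace = 0} ≃ R × R × R where
  toFun M := (M.1 0 0, M.1 0 1, M.1 1 0)
  invFun p := ⟨!![p.1, p.2.1; p.2.2, -p.1], by simp [trace_fin_two]⟩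
  left_inv := by
    rintro ⟨M, hM⟩
    have h11 : M 1 1 = -M 0 0 := by rw [trace_fin_two] at hM; linear_combination hM
    ext i j
    fin_cases i <;> fin_cases j <;> simp [h11]
  right_inv _ := rfl

theorem det_traceZeroEquiv_symm (p : R × R × R) :
    (traceZeroEquiv.symm p).1.det = -(p.1 * p.1 + p.2.1 * p.2.2) := by
  change det !![p.1, p.2.1; p.2.2, -p.1] = _
  rw [det_fin_two_of]
  ring

theorem trace_eq_zero_iff_mul_self_mem_range_scalar {F : Type*} [Field F] (h2 : (2 : F) ≠ 0)
    {M : Matrix (Fin 2) (Fin 2) F} (hM : M ≠ 0) :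
    M.trace = 0 ↔ M * M ∈ Set.range (scalar (Fin 2)) ∧ M ∉ Set.range (scalar (Fin 2)) := by
  simp only [Set.mem_range, scalar_apply, ← smul_one_eq_diagonal]
  constructor
  · intro htr
    refine ⟨⟨-M.det, by rw [mul_self_fin_two, htr, zero_smul, zero_sub, neg_smul]⟩, ?_⟩
    rintro ⟨a, rfl⟩
    have ha : a = 0 := by
      simpa [trace_fin_two, ← two_mul, h2] using htr
    exact hM (by rw [ha, zero_smul])
  · rintro ⟨⟨c, hc⟩, hns⟩
    by_contra htr
    refine hns ⟨M.trace⁻¹ * (c + M.det), ?_⟩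
    rw [mul_self_fin_two, eq_sub_iff_add_eq] at hc
    rw [mul_smul, add_smul, hc, smul_smul, inv_mul_cancel₀ htr, one_smul]

theorem card_traceZero_det_ne_zero {F : Type*} [Field F] [Fintype F] :
    Nat.card {M : Matrix (Fin 2) (Fin 2) F // M.trace = 0 ∧ M.det ≠ 0} =
      Fintype.card F ^ 2 * (Fintype.card F - 1) := by
  have : DecidableEq F := Classical.decEq F
  let e : {M : Matrix (Fin 2) (Fin 2) F // M.trace = 0 ∧ M.det ≠ 0} ≃
      {p : F × F × F // ¬ p.1 * p.1 + p.2.1 * p.2.2 = 0} :=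
    (Equiv.subtypeSubtypeEquivSubtypeInter _ _).symm.trans
      (traceZeroEquiv.symm.subtypeEquiv fun p => by
        rw [det_traceZeroEquiv_symm, neg_ne_zero]).symm
  rw [Nat.card_congr e, Nat.card_eq_fintype_card, Fintype.card_subtype_compl,
    card_mul_self_add_mul_eq_zero_triple, Fintype.card_prod, Fintype.card_prod, Nat.mul_sub_one,
    sq, mul_assoc]

end FinTwo

end Matrix

namespace Matrix.GeneralLinearGroup

variable {n : Type*} [Fintype n] [DecidableEq n]

noncomputable def subtypeEquivIsUnitDet {R : Type*} [CommRing R] (P : Matrix n n R → Prop) :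
    {g : GL n R // P g} ≃ {M : Matrix n n R // P M ∧ IsUnit M.det} where
  toFun g := ⟨g.1, g.2, (isUnit_iff_isUnit_det _).mp g.1.isUnit⟩
  invFun M := ⟨((isUnit_iff_isUnit_det _).mpr M.2.2).unit, M.2.1⟩
  left_inv _ := Subtype.ext (Units.ext rfl)
  right_inv _ := rfl

theorem card_center [Nonempty n] (F : Type*) [Field F] :
    Nat.card (Subgroup.center (GL n F)) = Nat.card F - 1 := by
  have hinj : Function.Injective (scalar n : Fˣ →* GL n F) := fun u v huv =>
    Units.ext <| Matrix.scalar_inj.mp <| congrArg Units.val huv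
  rw [center_eq_range_scalar, Nat.card_congr (MonoidHom.ofInjective hinj).toEquiv.symm,
    Nat.card_units]

theorem sq_mem_center_and_not_mem_center_iff_trace_eq_zero {F : Type*} [Field F]
    (h2 : (2 : F) ≠ 0) (g : GL (Fin 2) F) :
    g ^ 2 ∈ Subgroup.center (GL (Fin 2) F) ∧ g ∉ Subgroup.center (GL (Fin 2) F) ↔
      (g : Matrix (Fin 2) (Fin 2) F).trace = 0 := by
  rw [trace_eq_zero_iff_mul_self_mem_range_scalar h2 g.ne_zero,
    mem_center_iff_val_mem_range_scalar, mem_center_iff_val_mem_range_scalar, sq, Units.val_mul]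

theorem card_traceZero {F : Type*} [Field F] [Fintype F] :
    Nat.card {g : GL (Fin 2) F // (g : Matrix (Fin 2) (Fin 2) F).trace = 0} =
      Fintype.card F ^ 2 * (Fintype.card F - 1) := by
  classical
  rw [Nat.card_congr ((subtypeEquivIsUnitDet fun M => M.trace = 0).trans
    (Equiv.subtypeEquivRight fun M => by rw [isUnit_iff_ne_zero])), card_traceZero_det_ne_zero]

end Matrix.GeneralLinearGroup

theorem QuotientGroup.orderOf_mk_eq_two_iff {G : Type*} [Group G] {N : Subgroup G} [N.Normal]
    (g : G) : orderOf (g : G ⧸ N) = 2 ↔ g ^ 2 ∈ N ∧ g ∉ N := by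
  rw [orderOf_eq_prime_iff, ← QuotientGroup.mk_pow, QuotientGroup.eq_one_iff, Ne,
    QuotientGroup.eq_one_iff]

theorem FiniteField.two_ne_zero_of_odd_card {F : Type*} [Field F] [Fintype F]
    (hodd : Odd (Fintype.card F)) : (2 : F) ≠ 0 :=
  Ring.two_ne_zero fun h => by
    have := FiniteField.even_card_iff_char_two.mp h
    rw [Nat.odd_iff] at hodd
    omega

theorem stmt11 {F : Type*} [Field F] [Fintype F] (hodd : Odd (Fintype.card F)) :
    Nat.card {x : GL (Fin 2) F ⧸ Subgroup.center (GL (Fin 2) F) | orderOf x = 2} =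
      Fintype.card F ^ 2 := by
  have hpreimage : QuotientGroup.mk ⁻¹' {x : GL (Fin 2) F ⧸ Subgroup.center (GL (Fin 2) F) |
      orderOf x = 2} = {g : GL (Fin 2) F | (g : Matrix (Fin 2) (Fin 2) F).trace = 0} := by
    ext g
    exact (QuotientGroup.orderOf_mk_eq_two_iff g).trans
      (GeneralLinearGroup.sq_mem_center_and_not_mem_center_iff_trace_eq_zero
        (FiniteField.two_ne_zero_of_odd_card hodd) g)
  have hcard := Nat.card_congr (QuotientGroup.preimageMkEquivSubgroupProdSet _
    {x : GL (Fin 2) F ⧸ Subgroup.center (GL (Fin 2) F) | orderOf x = 2})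
  rw [hpreimage, Nat.card_prod, GeneralLinearGroup.card_center,
    Nat.card_eq_fintype_card (α := F)] at hcard
  have hq : 0 < Fintype.card F - 1 := Nat.sub_pos_of_lt Fintype.one_lt_card
  refine Nat.eq_of_mul_eq_mul_left hq ?_
  rw [← hcard]
  exact GeneralLinearGroup.card_traceZero.trans (mul_comm _ _)
end

section
/- Let q be an odd prime power. The number of involutions in PSL₂(𝔽_q) equals q(q+1)/2 if q ≡ 1 (mod 4), and equals q(q−1)/2 if q ≡ 3 (mod 4). -/
/-!
An element `g ∈ SL₂(F)` maps to an involution of `PSL₂(F)` iff `g² = ±1` and `g ≠ ±1`; since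
`g² = 1` forces `g = ±1` in odd characteristic, this means `g² = -1`, and each involution has
exactly the two lifts `±g`. By Cayley–Hamilton, `g² = -1` iff `tr g = 0`, i.e.
`g = !![a, b; c, -a]` with `bc = -(1 + a²)`. For fixed `a` the equation `bc = k` has `q - 1`
solutions if `k ≠ 0` and `2q - 1` if `k = 0`, and `1 + a² = 0` has `1 + χ(-1)` solutions, so
there are `q(q - 1) + q(1 + χ(-1)) = q(q + χ(-1))` such `g`, where `q = |F|`, `χ` is the
quadratic character and `χ(-1) = ±1` according as `q ≡ ±1 (mod 4)`.
-/

open Matrix Finset ZMod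
open scoped MatrixGroups

namespace FiniteField

variable {F : Type*} [Field F] [Fintype F] [DecidableEq F]

theorem card_filter_mul_eq_of_ne_zero {b : F} (hb : b ≠ 0) (k : F) :
    #{c : F | b * c = k} = 1 := by
  rw [card_eq_one]
  exact ⟨k / b, by ext c; simp [eq_div_iff hb, mul_comm]⟩

theorem card_filter_fst_mul_snd_eq (k : F) :
    #{p : F × F | p.1 * p.2 = k} = Fintype.card F - 1 + if k = 0 then Fintype.card F else 0 := by
  have hfiber : ∀ b : F, #{c : F | b * c = k} =
      if b = 0 then (if k = 0 then Fintype.card F else 0) else 1 := by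
    intro b
    split_ifs with hb hk
    · simp [hb, hk]
    · simp [hb, Ne.symm hk]
    · exact card_filter_mul_eq_of_ne_zero hb k
  rw [card_filter, Fintype.sum_prod_type]
  simp_rw [← card_filter, hfiber]
  rw [sum_ite, filter_eq', filter_ne', if_pos (mem_univ 0), sum_const, sum_const, card_singleton,
    card_erase_of_mem (mem_univ 0), card_univ, smul_eq_mul, smul_eq_mul,
    one_mul, mul_one, add_comm]

theorem card_sq_eq_neg_one (hF : ringChar F ≠ 2) :
    (#{a : F | a ^ 2 = -1} : ℤ) = χ₄ (Fintype.card F) + 1 := by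
  rw [← quadraticChar_neg_one hF, ← quadraticChar_card_sqrts hF, Set.toFinset_ofPred]

end FiniteField

namespace Matrix

theorem sq_eq_trace_smul_sub_det_smul_one {R : Type*} [CommRing R]
    (M : Matrix (Fin 2) (Fin 2) R) : M ^ 2 = M.trace • M - M.det • 1 := by
  ext i j
  fin_cases i <;> fin_cases j <;> simp [sq, mul_apply, trace_fin_two, det_fin_two] <;> ring

namespace SpecialLinearGroup

open Subgroup

section CommRing

variable {R : Type*} [CommRing R]

theorem coe_sq_eq_trace_smul_sub_one (g : SL(2, R)) :
    ((g ^ 2 : SL(2, R)) : Matrix (Fin 2) (Fin 2) R) =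
      (g : Matrix (Fin 2) (Fin 2) R).trace • g - 1 := by
  rw [coe_pow, sq_eq_trace_smul_sub_det_smul_one, g.det_coe, one_smul]

def traceZeroEquiv : {g : SL(2, R) // (g : Matrix (Fin 2) (Fin 2) R).trace = 0} ≃
    Σ a : R, {p : R × R // p.1 * p.2 = -(1 + a ^ 2)} where
  toFun g := ⟨g.1 0 0, (g.1 0 1, g.1 1 0), by
    have hdet := g.1.det_coe
    have htr := g.2
    rw [det_fin_two] at hdet
    rw [trace_fin_two] at htr
    linear_combination (g.1 0 0) * htr - hdet⟩
  invFun p := ⟨⟨!![p.1, p.2.1.1; p.2.1.2, -p.1], by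
    rw [det_fin_two_of]; linear_combination -p.2.2⟩, by simp [trace_fin_two_of]⟩
  left_inv g := by
    have htr : g.1 1 1 = -g.1 0 0 := by
      have := g.2; rw [trace_fin_two] at this; linear_combination this
    ext i j
    fin_cases i <;> fin_cases j <;> simp [htr]
  right_inv p := by
    obtain ⟨a, ⟨b, c⟩, h⟩ := p
    rfl

theorem one_ne_neg_one (h2 : (2 : R) ≠ 0) : (1 : SL(2, R)) ≠ -1 := fun h => by
  have := congr_fun₂ (congrArg Subtype.val h) 0 0
  simp [coe_neg] at this
  exact h2 (by linear_combination this)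

end CommRing

section IsDomain

variable {R : Type*} [CommRing R] [IsDomain R]

theorem mem_center_iff_eq_one_or_eq_neg_one {g : SL(2, R)} :
    g ∈ center SL(2, R) ↔ g = 1 ∨ g = -1 := by
  rw [mem_center_iff, Fintype.card_fin]
  constructor
  · rintro ⟨r, hr, hg⟩
    rcases sq_eq_one_iff.mp hr with rfl | rfl
    · exact Or.inl (Subtype.ext (by rw [← hg, map_one, coe_one]))
    · exact Or.inr (Subtype.ext (by rw [← hg, map_neg, map_one, coe_neg, coe_one]))
  · rintro (rfl | rfl)
    · exact ⟨1, one_pow 2, by rw [map_one, coe_one]⟩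
    · exact ⟨-1, neg_one_sq, by rw [map_neg, map_one, coe_neg, coe_one]⟩

theorem sq_eq_neg_one_iff_trace_eq_zero (g : SL(2, R)) :
    g ^ 2 = -1 ↔ (g : Matrix (Fin 2) (Fin 2) R).trace = 0 := by
  have hg : (g : Matrix (Fin 2) (Fin 2) R) ≠ 0 := fun h => by
    simpa [h] using g.det_coe
  refine Subtype.coe_inj.symm.trans ?_
  rw [coe_sq_eq_trace_smul_sub_one, coe_neg, coe_one, sub_eq_neg_self, smul_eq_zero,
    or_iff_left hg]

theorem eq_one_or_eq_neg_one_of_sq_eq_one (h2 : (2 : R) ≠ 0) {g : SL(2, R)} (h : g ^ 2 = 1) :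
    g = 1 ∨ g = -1 := by
  -- Cayley–Hamilton gives `t • g = 2`, with `t ≠ 0`, so `g` commutes with everything.
  set t := (g : Matrix (Fin 2) (Fin 2) R).trace
  have hg : t • (g : Matrix (Fin 2) (Fin 2) R) = (2 : R) • 1 := by
    have := congrArg Subtype.val h
    rw [coe_sq_eq_trace_smul_sub_one, coe_one, sub_eq_iff_eq_add] at this
    rw [this, two_smul]
  have ht : t ≠ 0 := fun ht => h2 (by simpa [ht] using (congr_fun₂ hg 0 0).symm)
  rw [← mem_center_iff_eq_one_or_eq_neg_one]
  refine Subgroup.mem_center_iff.mpr fun k => Subtype.ext (smul_right_injective _ ht ?_)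
  simp only [coe_mul]
  rw [← Matrix.mul_smul, ← Matrix.smul_mul, hg, Matrix.mul_smul, Matrix.smul_mul, mul_one, one_mul]

theorem card_center (h2 : (2 : R) ≠ 0) : Nat.card (center SL(2, R)) = 2 := by
  have : (center SL(2, R) : Set SL(2, R)) = {1, -1} := by
    ext g
    exact mem_center_iff_eq_one_or_eq_neg_one
  rw [← SetLike.coe_sort_coe, this, Nat.card_coe_set_eq, Set.ncard_pair (one_ne_neg_one h2)]

theorem orderOf_mk_eq_two_iff (h2 : (2 : R) ≠ 0) (g : SL(2, R)) :
    orderOf (g : SL(2, R) ⧸ center SL(2, R)) = 2 ↔ g ^ 2 = -1 := by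
  rw [orderOf_eq_prime_iff, ← QuotientGroup.mk_pow, Ne, QuotientGroup.eq_one_iff,
    QuotientGroup.eq_one_iff, mem_center_iff_eq_one_or_eq_neg_one,
    mem_center_iff_eq_one_or_eq_neg_one]
  constructor
  · rintro ⟨h | h, hg⟩
    · exact absurd (eq_one_or_eq_neg_one_of_sq_eq_one h2 h) hg
    · exact h
  · intro h
    refine ⟨Or.inr h, ?_⟩
    rintro (rfl | rfl) <;> exact one_ne_neg_one h2 (by simpa using h)

theorem two_mul_card_orderOf_eq_two (h2 : (2 : R) ≠ 0) :
    2 * Nat.card {x : SL(2, R) ⧸ center SL(2, R) | orderOf x = 2} =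
      Nat.card {g : SL(2, R) | g ^ 2 = -1} := by
  have := QuotientGroup.card_preimage_mk (center SL(2, R)) {x | orderOf x = 2}
  rw [card_center h2] at this
  rw [← this]
  congr 2
  ext g
  exact orderOf_mk_eq_two_iff h2 g

end IsDomain

theorem card_sq_eq_neg_one {F : Type*} [Field F] [Fintype F] (hF : ringChar F ≠ 2) :
    (Nat.card {g : SL(2, F) | g ^ 2 = -1} : ℤ) =
      Fintype.card F * (Fintype.card F + χ₄ (Fintype.card F)) := by
  have := Classical.decEq F
  have hcard : Nat.card {g : SL(2, F) | g ^ 2 = -1} =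
      ∑ a : F, #{p : F × F | p.1 * p.2 = -(1 + a ^ 2)} := by
    rw [Set.coe_ofPred, Nat.card_congr
      ((Equiv.subtypeEquivRight sq_eq_neg_one_iff_trace_eq_zero).trans traceZeroEquiv),
      Nat.card_sigma]
    simp only [Nat.card_eq_fintype_card, Fintype.card_subtype]
  have hroots : #{a : F | -(1 + a ^ 2) = 0} = #{a : F | a ^ 2 = -1} := by
    congr 1
    refine filter_congr fun a _ => ⟨fun h => ?_, fun h => ?_⟩ <;> linear_combination -h
  have hq : 1 ≤ Fintype.card F := Fintype.card_pos
  rw [hcard, sum_congr rfl fun a _ => FiniteField.card_filter_fst_mul_snd_eq _, sum_add_distrib,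
    sum_const, card_univ, sum_ite, sum_const_zero, sum_const, hroots, smul_eq_mul, smul_eq_mul,
    add_zero, Nat.cast_add, Nat.cast_mul, Nat.cast_mul, FiniteField.card_sq_eq_neg_one hF,
    Nat.cast_sub hq]
  push_cast
  ring

end SpecialLinearGroup

end Matrix

theorem stmt12 {F : Type*} [Field F] [Fintype F] (hodd : Odd (Fintype.card F)) :
    (Fintype.card F % 4 = 1 →
      Nat.card {x : Matrix.SpecialLinearGroup (Fin 2) F ⧸
          Subgroup.center (Matrix.SpecialLinearGroup (Fin 2) F) | orderOf x = 2} =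
        Fintype.card F * (Fintype.card F + 1) / 2) ∧
    (Fintype.card F % 4 = 3 →
      Nat.card {x : Matrix.SpecialLinearGroup (Fin 2) F ⧸
          Subgroup.center (Matrix.SpecialLinearGroup (Fin 2) F) | orderOf x = 2} =
        Fintype.card F * (Fintype.card F - 1) / 2) := by
  have hF : ringChar F ≠ 2 := fun h => by
    have := FiniteField.even_card_iff_char_two.mp h
    rw [Nat.odd_iff] at hodd
    omega
  have hcount := SpecialLinearGroup.card_sq_eq_neg_one hF
  rw [← SpecialLinearGroup.two_mul_card_orderOf_eq_two (Ring.two_ne_zero hF)] at hcount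
  constructor
  · intro h4
    rw [χ₄_nat_one_mod_four h4] at hcount
    have : 2 * Nat.card {x : SL(2, F) ⧸ Subgroup.center SL(2, F) | orderOf x = 2} =
        Fintype.card F * (Fintype.card F + 1) := by exact_mod_cast hcount
    omega
  · intro h4
    rw [χ₄_nat_three_mod_four h4] at hcount
    have : 2 * Nat.card {x : SL(2, F) ⧸ Subgroup.center SL(2, F) | orderOf x = 2} =
        Fintype.card F * (Fintype.card F - 1) := by
      have hq : 1 ≤ Fintype.card F := Fintype.card_pos
      zify [hq] at hcount ⊢
      linear_combination hcount
    omega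
end
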